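/- arXiv:math/0204020 — 3 statements merged into one kernel-verified Lean document; each statement's English description precedes it below -/
import Mathlib

section
/- Let H be a group and C a subgroup of the center of H such that A := H/C is abelian, with quotient map π : H → A. Then the map σ ↦ q_σ, where q_σ(h) := h·σ(h) (which lies in C since π(h·σ(h)) = 1), is a bijection from the set of symmetric structures on H onto the set of functions q : H → C satisfying: (i) q(c) = c² for all c ∈ C, and (ii) q(h₁·h₂) = q(h₁)·q(h₂)·⁅h₁,h₂⁆ for all h₁,h₂ ∈ H, where ⁅h₁,h₂⁆ = h₁h₂h₁⁻¹h₂⁻¹ is the commutator (which lies in C since A is abelian). The inverse bijection sends q to the map σ_q(h) := q(h)·h⁻¹. -/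
/-- A symmetric structure on a central extension `H` of the abelian group `A = H/C`
by `C`: an automorphism `σ` of `H` with `σ ∘ σ = id`, fixing `C` pointwise and
inducing inversion on `A = H/C`. -/
def IsSymmStruct {H : Type*} [Group H] (C : Subgroup H) [C.Normal] (σ : H ≃* H) : Prop :=
  (∀ h : H, σ (σ h) = h) ∧ (∀ c ∈ C, σ c = c) ∧
    ∀ h : H, (QuotientGroup.mk (σ h) : H ⧸ C) = (QuotientGroup.mk h)⁻¹

open scoped commutatorElement

/-- The property of a function `q : H → C` (recorded as a function `H → H` with values
in `C`): `q(c) = c²` for `c ∈ C`, and `q(h₁h₂) = q(h₁)·q(h₂)·⁅h₁,h₂⁆`, where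
`⁅h₁,h₂⁆ = h₁h₂h₁⁻¹h₂⁻¹` is the commutator. -/
def IsQMap {H : Type*} [Group H] (C : Subgroup H) (q : H → H) : Prop :=
  (∀ h : H, q h ∈ C) ∧ (∀ c ∈ C, q c = c ^ 2) ∧
    ∀ h₁ h₂ : H, q (h₁ * h₂) = q h₁ * q h₂ * ⁅h₁, h₂⁆

/-!
A symmetric structure `σ` and the map `q_σ(h) = h σ(h)` determine each other through
`σ(h) = q_σ(h) h⁻¹`, because `q_σ` takes values in the central subgroup `C`. The quadratic
identity for `q_σ` is the multiplicativity of `σ` rewritten with central factors moved aside.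
Conversely, the identity forces `⁅h₁, h₂⁆ = (q(h₁) q(h₂))⁻¹ q(h₁h₂) ∈ C`, which makes
`h ↦ q(h) h⁻¹` multiplicative, and it is an involution because `q(c h) = c² q(h)` for `c ∈ C`.
-/

namespace IsQMap

variable {H : Type*} [Group H] {C : Subgroup H} {q : H → H}

lemma map_one (hq : IsQMap C q) : q 1 = 1 := by
  simpa using hq.2.1 1 C.one_mem

lemma map_inv (hq : IsQMap C q) (h : H) : q h⁻¹ = (q h)⁻¹ := by
  have h_mul := hq.2.2 h h⁻¹
  rw [mul_inv_cancel, hq.map_one, commutatorElement_def] at h_mul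
  exact eq_inv_of_mul_eq_one_right (by simpa using h_mul.symm)

lemma commutatorElement_mem (hq : IsQMap C q) (a b : H) : ⁅a, b⁆ ∈ C := by
  rw [eq_inv_mul_of_mul_eq (hq.2.2 a b).symm]
  exact C.mul_mem (C.inv_mem (C.mul_mem (hq.1 a) (hq.1 b))) (hq.1 _)

variable (hC : C ≤ Subgroup.center H)
include hC

lemma map_mul_of_mem (hq : IsQMap C q) {c : H} (hc : c ∈ C) (h : H) :
    q (c * h) = c ^ 2 * q h := by
  rw [hq.2.2, hq.2.1 c hc, commutatorElement_eq_one_iff_mul_comm.mpr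
    (Subgroup.mem_center_iff.mp (hC hc) h).symm, mul_one]

lemma mul_inv_involutive (hq : IsQMap C q) : Function.Involutive (fun h => q h * h⁻¹) := by
  intro h
  have hq_comm : h * q h = q h * h := Subgroup.mem_center_iff.mp (hC (hq.1 h)) h
  simp only [hq.map_mul_of_mem hC (hq.1 h), hq.map_inv, mul_inv_rev, inv_inv]
  rw [sq, mul_inv_cancel_right, ← mul_assoc, ← hq_comm, mul_inv_cancel_right]

lemma map_mul_mul_inv (hq : IsQMap C q) (a b : H) :
    q (a * b) * (a * b)⁻¹ = q a * a⁻¹ * (q b * b⁻¹) := by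
  have hcomm : ⁅a, b⁆ * (b⁻¹ * a⁻¹) = b⁻¹ * a⁻¹ * ⁅a, b⁆ :=
    (Subgroup.mem_center_iff.mp (hC (hq.commutatorElement_mem a b)) _).symm
  have hqb : a⁻¹ * q b = q b * a⁻¹ := Subgroup.mem_center_iff.mp (hC (hq.1 b)) _
  calc q (a * b) * (a * b)⁻¹
      = q a * q b * (⁅a, b⁆ * (b⁻¹ * a⁻¹)) := by rw [hq.2.2, mul_inv_rev, mul_assoc]
    _ = q a * (q b * a⁻¹) * b⁻¹ := by rw [hcomm, commutatorElement_def]; group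
    _ = q a * a⁻¹ * (q b * b⁻¹) := by rw [← hqb]; group

def toMulEquiv (hq : IsQMap C q) : H ≃* H where
  toFun h := q h * h⁻¹
  invFun h := q h * h⁻¹
  left_inv := hq.mul_inv_involutive hC
  right_inv := hq.mul_inv_involutive hC
  map_mul' := hq.map_mul_mul_inv hC

lemma isSymmStruct_toMulEquiv [C.Normal] (hq : IsQMap C q) :
    IsSymmStruct C (hq.toMulEquiv hC) := by
  refine ⟨hq.mul_inv_involutive hC, fun c hc => ?_, fun h => ?_⟩
  · change q c * c⁻¹ = c
    rw [hq.2.1 c hc, sq, mul_inv_cancel_right]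
  · change ((q h * h⁻¹ : H) : H ⧸ C) = (h : H ⧸ C)⁻¹
    rw [QuotientGroup.mk_mul, (QuotientGroup.eq_one_iff _).mpr (hq.1 h), one_mul,
      QuotientGroup.mk_inv]

end IsQMap

namespace IsSymmStruct

variable {H : Type*} [Group H] {C : Subgroup H} [C.Normal] {σ : H ≃* H}

lemma mul_apply_mem (hσ : IsSymmStruct C σ) (h : H) : h * σ h ∈ C := by
  rw [← QuotientGroup.eq_one_iff, QuotientGroup.mk_mul, hσ.2.2 h, mul_inv_cancel]

lemma isQMap (hC : C ≤ Subgroup.center H) (hσ : IsSymmStruct C σ) :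
    IsQMap C (fun h => h * σ h) := by
  refine ⟨hσ.mul_apply_mem, fun c hc => by simp only [hσ.2.1 c hc, sq], fun a b => ?_⟩
  have hqa : b⁻¹ * (a * σ a) = a * σ a * b⁻¹ :=
    Subgroup.mem_center_iff.mp (hC (hσ.mul_apply_mem a)) _
  have hqab : ⁅a, b⁆ * (a * σ a * (b * σ b)) = a * σ a * (b * σ b) * ⁅a, b⁆ :=
    Subgroup.mem_center_iff.mp (hC (C.mul_mem (hσ.mul_apply_mem a) (hσ.mul_apply_mem b))) _
  calc a * b * σ (a * b)
      = a * b * a⁻¹ * (a * σ a * b⁻¹) * (b * σ b) := by rw [map_mul]; group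
    _ = ⁅a, b⁆ * (a * σ a * (b * σ b)) := by rw [← hqa, commutatorElement_def]; group
    _ = a * σ a * (b * σ b) * ⁅a, b⁆ := hqab

end IsSymmStruct

def symmStructEquivQMap {H : Type*} [Group H] (C : Subgroup H) [C.Normal]
    (hC : C ≤ Subgroup.center H) :
    {σ : H ≃* H // IsSymmStruct C σ} ≃ {q : H → H // IsQMap C q} where
  toFun σ := ⟨fun h => h * σ.1 h, σ.2.isQMap hC⟩
  invFun q := ⟨q.2.toMulEquiv hC, q.2.isSymmStruct_toMulEquiv hC⟩
  left_inv σ := Subtype.ext <| MulEquiv.ext fun h => by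
    change h * σ.1 h * h⁻¹ = σ.1 h
    rw [← Subgroup.mem_center_iff.mp (hC (σ.2.mul_apply_mem h)), inv_mul_cancel_left]
  right_inv q := Subtype.ext <| funext fun h => by
    change h * (q.1 h * h⁻¹) = q.1 h
    rw [← mul_assoc, Subgroup.mem_center_iff.mp (hC (q.2.1 h)), mul_inv_cancel_right]

theorem symmetric_structures_biject_with_quadratic_maps_general
    {H : Type*} [Group H] (C : Subgroup H) [C.Normal]
    (hC : C ≤ Subgroup.center H) :
    ∃ e : {σ : H ≃* H // IsSymmStruct C σ} ≃ {q : H → H // IsQMap C q},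
      (∀ (σ : {σ : H ≃* H // IsSymmStruct C σ}) (h : H), (e σ).1 h = h * σ.1 h) ∧
      (∀ (q : {q : H → H // IsQMap C q}) (h : H), (e.symm q).1 h = q.1 h * h⁻¹) :=
  ⟨symmStructEquivQMap C hC, fun _ _ => rfl, fun _ _ => rfl⟩

/-- Let `H` be a group, `C ≤ Z(H)` with `A := H/C` abelian. Then
`σ ↦ q_σ`, `q_σ(h) := h·σ(h)` (which lies in `C`), is a bijection from the set of
symmetric structures on `H` onto the set of maps `q : H → C` with `q(c) = c²` on `C`
and `q(h₁h₂) = q(h₁)q(h₂)⁅h₁,h₂⁆`; the inverse bijection sends `q` to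
`σ_q(h) := q(h)·h⁻¹`. -/
theorem symmetric_structures_biject_with_quadratic_maps
    {H : Type*} [Group H] (C : Subgroup H) [C.Normal]
    (hC : C ≤ Subgroup.center H)
    (hA : ∀ a b : H ⧸ C, a * b = b * a) :
    ∃ e : {σ : H ≃* H // IsSymmStruct C σ} ≃ {q : H → H // IsQMap C q},
      (∀ (σ : {σ : H ≃* H // IsSymmStruct C σ}) (h : H), (e σ).1 h = h * σ.1 h) ∧
      (∀ (q : {q : H → H // IsQMap C q}) (h : H), (e.symm q).1 h = q.1 h * h⁻¹) :=
  symmetric_structures_biject_with_quadratic_maps_general C hC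
end

section
/- Let H be a group and C a subgroup of the center of H such that A := H/C is abelian, with quotient map π : H → A. For f ∈ Hom(A,C) let φ_f : H → H be the automorphism h ↦ h·f(π(h)). Then the set of symmetric structures on H, if nonempty, is a torsor under Hom(A,C): (i) for every symmetric structure σ and every f ∈ Hom(A,C), the composite φ_f ∘ σ is again a symmetric structure; (ii) for any two symmetric structures σ, σ′ on H there is a unique f ∈ Hom(A,C) with σ′ = φ_f ∘ σ. -/
/-- Let `H` be a group, `C ≤ Z(H)` with `A := H/C` abelian. For
`f : A →* C` let `φ_f(h) = h·f(π h)`. Then the set of symmetric structures on `H`, if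
nonempty, is a torsor under `Hom(A,C)`: (i) for a symmetric structure `σ` and any
`f : A →* C`, the composite `φ_f ∘ σ` is again a symmetric structure; (ii) for any two
symmetric structures `σ, σ'` there is a unique `f ∈ Hom(A,C)` with `σ' = φ_f ∘ σ`. -/
theorem symmetric_structures_torsor_under_hom
    {H : Type*} [Group H] (C : Subgroup H) [C.Normal]
    (hC : C ≤ Subgroup.center H)
    (hA : ∀ a b : H ⧸ C, a * b = b * a) :
    -- (i) `φ_f ∘ σ` is again a symmetric structure
    (∀ σ : H ≃* H, IsSymmStruct C σ → ∀ f : (H ⧸ C) →* C,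
      ∃ τ : H ≃* H, IsSymmStruct C τ ∧
        ∀ h : H, τ h = σ h * (f (QuotientGroup.mk (σ h)) : H)) ∧
    -- (ii) any two symmetric structures differ by a unique `f ∈ Hom(A,C)`
    (∀ σ σ' : H ≃* H, IsSymmStruct C σ → IsSymmStruct C σ' →
      ∃! f : (H ⧸ C) →* C,
        ∀ h : H, σ' h = σ h * (f (QuotientGroup.mk (σ h)) : H)) := by
  have comm : ∀ c ∈ C, ∀ g : H, c * g = g * c := by
    intro c hc g
    exact ((Subgroup.mem_center_iff.mp (hC hc)) g).symm
  have mk_mem_one : ∀ c ∈ C, (QuotientGroup.mk c : H ⧸ C) = 1 := by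
    intro c hc
    exact (QuotientGroup.eq_one_iff c).mpr hc
  constructor
  · intro σ hσ f
    obtain ⟨hinv, hfix, hq⟩ := hσ
    set t : H → H := fun h => σ h * (f (QuotientGroup.mk (σ h)) : H) with ht
    have tinv : ∀ h, t (t h) = h := by
      intro h
      have hc : (f (QuotientGroup.mk (σ h)) : H) ∈ C := (f _).2
      have h1 : σ (t h) = h * (f (QuotientGroup.mk (σ h)) : H) := by
        simp only [ht, map_mul, hinv, hfix _ hc]
      have h2 : (QuotientGroup.mk (σ (t h)) : H ⧸ C) = QuotientGroup.mk h := by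
        rw [h1, QuotientGroup.mk_mul, mk_mem_one _ hc, mul_one]
      have h3 : (f (QuotientGroup.mk (σ h)) : H) = ((f (QuotientGroup.mk h))⁻¹ : C) := by
        rw [hq, map_inv]
      show σ (t h) * (f (QuotientGroup.mk (σ (t h))) : H) = h
      rw [h2, h1, h3]
      simp [mul_assoc]
    have tmul : ∀ a b, t (a * b) = t a * t b := by
      intro a b
      have hca : (f (QuotientGroup.mk (σ a)) : H) ∈ C := (f _).2
      simp only [ht, map_mul, QuotientGroup.mk_mul, Subgroup.coe_mul]
      calc σ a * σ b * ((f (QuotientGroup.mk (σ a)) : H) * (f (QuotientGroup.mk (σ b)) : H))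
          = σ a * ((σ b * (f (QuotientGroup.mk (σ a)) : H)) * (f (QuotientGroup.mk (σ b)) : H)) := by
            group
        _ = σ a * (((f (QuotientGroup.mk (σ a)) : H) * σ b) * (f (QuotientGroup.mk (σ b)) : H)) := by
            rw [comm _ hca (σ b)]
        _ = σ a * (f (QuotientGroup.mk (σ a)) : H) * (σ b * (f (QuotientGroup.mk (σ b)) : H)) := by
            group
    refine ⟨{ toFun := t, invFun := t, left_inv := tinv, right_inv := tinv,
              map_mul' := tmul }, ⟨tinv, ?_, ?_⟩, fun h => rfl⟩
    · intro c hc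
      show t c = c
      simp only [ht, hfix c hc, mk_mem_one c hc, map_one, OneMemClass.coe_one, mul_one]
    · intro h
      show (QuotientGroup.mk (t h) : H ⧸ C) = _
      simp only [ht, QuotientGroup.mk_mul, mk_mem_one _ (f _).2, mul_one, hq]
  · intro σ σ' hσ hσ'
    obtain ⟨hinv, hfix, hq⟩ := hσ
    obtain ⟨hinv', hfix', hq'⟩ := hσ'
    have mem : ∀ h : H, (σ h)⁻¹ * σ' h ∈ C := by
      intro h
      rw [← QuotientGroup.eq_one_iff, QuotientGroup.mk_mul, QuotientGroup.mk_inv, hq, hq']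
      group
    set F : H →* C :=
      { toFun := fun h => ⟨(σ h)⁻¹ * σ' h, mem h⟩
        map_one' := by ext; simp
        map_mul' := by
          intro a b
          ext
          show (σ (a * b))⁻¹ * σ' (a * b) = ((σ a)⁻¹ * σ' a) * ((σ b)⁻¹ * σ' b)
          have hca := mem a
          calc (σ (a * b))⁻¹ * σ' (a * b)
              = (σ b)⁻¹ * (((σ a)⁻¹ * σ' a) * σ' b) := by
                simp only [map_mul]; group
            _ = (σ b)⁻¹ * (σ' b * ((σ a)⁻¹ * σ' a)) := by
                rw [comm _ hca (σ' b)]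
            _ = ((σ a)⁻¹ * σ' a) * ((σ b)⁻¹ * σ' b) := by
                rw [← mul_assoc, ← comm _ hca ((σ b)⁻¹ * σ' b)] } with hF
    have FC : ∀ c ∈ C, F c = 1 := by
      intro c hc
      ext
      show (σ c)⁻¹ * σ' c = 1
      rw [hfix c hc, hfix' c hc, inv_mul_cancel]
    set Fbar : (H ⧸ C) →* C := QuotientGroup.lift C F FC with hFbar
    set invHom : (H ⧸ C) →* (H ⧸ C) :=
      { toFun := fun a => a⁻¹
        map_one' := inv_one
        map_mul' := fun a b => by
          show (a * b)⁻¹ = a⁻¹ * b⁻¹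
          rw [mul_inv_rev, hA] } with hinvHom
    refine ⟨Fbar.comp invHom, ?_, ?_⟩
    · intro h
      have : Fbar.comp invHom (QuotientGroup.mk (σ h)) = F h := by
        show Fbar (QuotientGroup.mk (σ h))⁻¹ = F h
        rw [hq, inv_inv]
        exact QuotientGroup.lift_mk' C FC h
      rw [this]
      show σ' h = σ h * ((σ h)⁻¹ * σ' h)
      group
    · intro g hg
      refine MonoidHom.ext fun a => ?_
      obtain ⟨x, rfl⟩ := QuotientGroup.mk_surjective a
      have hx : (QuotientGroup.mk (σ (σ x)) : H ⧸ C) = QuotientGroup.mk x := by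
        rw [hinv]
      have h1 := hg (σ x)
      have h2 : σ' (σ x) = σ (σ x) * ((Fbar.comp invHom) (QuotientGroup.mk (σ (σ x))) : H) := by
        have : Fbar.comp invHom (QuotientGroup.mk (σ (σ x))) = F (σ x) := by
          show Fbar (QuotientGroup.mk (σ (σ x)))⁻¹ = F (σ x)
          rw [hq, inv_inv]
          exact QuotientGroup.lift_mk' C FC (σ x)
        rw [this]
        show σ' (σ x) = σ (σ x) * ((σ (σ x))⁻¹ * σ' (σ x))
        group
      rw [hx] at h1 h2
      have : (g (QuotientGroup.mk x) : H) = ((Fbar.comp invHom) (QuotientGroup.mk x) : H) := by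
        have := h1.symm.trans h2
        exact mul_left_cancel this
      exact Subtype.ext this
end

section
/- Let k be a field of characteristic zero, V a k-vector space, and let v = Σ_{m ≥ m₀} v_m z^m be a nonzero V-valued formal Laurent series (v_m ∈ V, with v_m = 0 for m below some integer m₀). Suppose there are scalars c₁, …, c_N ∈ k (N ≥ 1) and λ ∈ k such that z·(dv/dz) = (Σ_{n=1}^{N} c_n z^{-n} + λ)·v, i.e., m·v_m = λ·v_m + Σ_{n=1}^{N} c_n·v_{m+n} for every integer m. Then c₁ = c₂ = … = c_N = 0, λ is (the image in k of) an integer d, and v is concentrated in degree d: v_m = 0 for all m ≠ d. (This is the differential-equation rigidity argument in the proof that every module over a lattice vertex algebra of nondegenerate level integrates to the Heisenberg group.) -/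
/-- Let `k` be a field of characteristic zero and `V` a `k`-vector
space. Let `v = Σ_{m ≥ m₀} v_m z^m` be a nonzero `V`-valued formal Laurent series
(coefficients `v m`, vanishing below `m₀`). If there are scalars `c₁, …, c_N ∈ k`
(`N ≥ 1`) and `λ ∈ k` with `z·(dv/dz) = (Σ_{n=1}^N c_n z^{-n} + λ)·v`, i.e.
`m·v_m = λ·v_m + Σ_{n=1}^N c_n·v_{m+n}` for all `m ∈ ℤ`, then all `c_n = 0`, `λ` is
(the image in `k` of) an integer `d`, and `v` is concentrated in degree `d`. -/
theorem laurent_series_differential_equation_rigidity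
    {k V : Type*} [Field k] [CharZero k] [AddCommGroup V] [Module k V]
    (v : ℤ → V) (m₀ : ℤ) (hbd : ∀ m : ℤ, m < m₀ → v m = 0)
    (hv : ∃ m : ℤ, v m ≠ 0)
    (N : ℕ) (hN : 1 ≤ N) (c : ℕ → k) (lam : k)
    (heq : ∀ m : ℤ,
      (m : k) • v m = lam • v m + ∑ n ∈ Finset.Icc 1 N, c n • v (m + (n : ℤ))) :
    (∀ n ∈ Finset.Icc 1 N, c n = 0) ∧
      ∃ d : ℤ, lam = (d : k) ∧ ∀ m : ℤ, m ≠ d → v m = 0 := by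
  -- least element of the support
  obtain ⟨d, hd, hdle⟩ : ∃ d : ℤ, v d ≠ 0 ∧ ∀ m : ℤ, v m ≠ 0 → d ≤ m := by
    obtain ⟨d, hd1, hd2⟩ := Int.exists_least_of_bdd (P := fun m => v m ≠ 0)
      ⟨m₀, fun z hz => le_of_not_gt fun h => hz (hbd z h)⟩ hv
    exact ⟨d, hd1, hd2⟩
  have hvlt : ∀ m : ℤ, m < d → v m = 0 := fun m hm => by
    by_contra h; exact absurd (hdle m h) (not_le.mpr hm)
  classical
  -- all c_n vanish
  have hc : ∀ n ∈ Finset.Icc 1 N, c n = 0 := by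
    by_contra hcne
    push_neg at hcne
    set T : Finset ℕ := (Finset.Icc 1 N).filter (fun n => c n ≠ 0) with hT
    have hTne : T.Nonempty := by
      obtain ⟨n, hn, hcn⟩ := hcne
      exact ⟨n, Finset.mem_filter.mpr ⟨hn, hcn⟩⟩
    set n₀ := T.max' hTne with hn₀
    have hn₀T : n₀ ∈ T := T.max'_mem hTne
    obtain ⟨hn₀Icc, hcn₀⟩ := Finset.mem_filter.mp hn₀T
    have hn₀1 : 1 ≤ n₀ := (Finset.mem_Icc.mp hn₀Icc).1
    have key := heq (d - n₀)
    have h0 : v (d - n₀) = 0 := hvlt _ (by omega)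
    rw [h0, smul_zero, smul_zero, zero_add] at key
    have hsum : ∑ n ∈ Finset.Icc 1 N, c n • v (d - n₀ + (n : ℤ)) = c n₀ • v d := by
      rw [Finset.sum_eq_single n₀]
      · have : d - (n₀ : ℤ) + n₀ = d := by omega
        rw [this]
      · intro n hn hne
        by_cases hcn : c n = 0
        · rw [hcn, zero_smul]
        · have hnT : n ∈ T := Finset.mem_filter.mpr ⟨hn, hcn⟩
          have : n ≤ n₀ := T.le_max' n hnT
          have : n < n₀ := lt_of_le_of_ne this hne
          rw [hvlt _ (by omega), smul_zero]
      · intro h; exact absurd hn₀Icc h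
    rw [hsum] at key
    exact hcn₀ (by
      by_contra h
      exact hd (by simpa [smul_eq_zero, h] using key.symm))
  have hzero : ∀ m : ℤ, ((m : k) - lam) • v m = 0 := by
    intro m
    have key := heq m
    rw [Finset.sum_eq_zero (fun n hn => by rw [hc n hn, zero_smul]), add_zero] at key
    rw [sub_smul, key, sub_self]
  have hlam : lam = (d : k) := by
    rcases smul_eq_zero.mp (hzero d) with h | h
    · exact (sub_eq_zero.mp h).symm
    · exact absurd h hd
  refine ⟨hc, d, hlam, fun m hm => ?_⟩
  rcases smul_eq_zero.mp (hzero m) with h | h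
  · exfalso
    rw [hlam, sub_eq_zero] at h
    exact hm (Int.cast_injective h)
  · exact h
end
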